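/- Let R be an invertible n²×n² complex matrix. If (PR, μ) is an enhanced R-matrix in the sense of Definition 2, then R is biinvertible and μ = U, where U^i_j = Σ_a R̃^{ai}_{ja} with R̃ = ((R^{t₂})⁻¹)^{t₂}. Likewise, if (RP, ν) is an enhanced R-matrix in the sense of Definition 2, then R is biinvertible and ν = V, where V^i_j = Σ_a R̃^{ia}_{aj}. In particular, if a biinvertible R-matrix can be enhanced in the sense of Definition 2, the enhancement is unique. -/
import Mathlib


open scoped BigOperators

namespace Enhance

noncomputable section

/-- n×n complex matrices. -/
abbrev Mat1 (n : ℕ) := Matrix (Fin n) (Fin n) ℂ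

/-- n²×n² complex matrices, indexed by pairs. -/
abbrev Mat2 (n : ℕ) := Matrix (Fin n × Fin n) (Fin n × Fin n) ℂ

/-- n³×n³ complex matrices, indexed by triples. -/
abbrev Mat3 (n : ℕ) := Matrix (Fin n × Fin n × Fin n) (Fin n × Fin n × Fin n) ℂ

/-- Kronecker product of two n×n matrices: (μ⊗ν)^{ab}_{cd} = μ^a_c ν^b_d. -/
def kron {n : ℕ} (μ ν : Mat1 n) : Mat2 n :=
  Matrix.of fun p q => μ p.1 q.1 * ν p.2 q.2

/-- The permutation matrix P^{ab}_{cd} = δ^a_d δ^b_c. -/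
def Pmat (n : ℕ) : Mat2 n :=
  Matrix.of fun p q => if p.1 = q.2 ∧ p.2 = q.1 then 1 else 0

/-- A₁₂ = A ⊗ I. -/
def A12 {n : ℕ} (A : Mat2 n) : Mat3 n :=
  Matrix.of fun p q => A (p.1, p.2.1) (q.1, q.2.1) * (if p.2.2 = q.2.2 then 1 else 0)

/-- A₂₃ = I ⊗ A. -/
def A23 {n : ℕ} (A : Mat2 n) : Mat3 n :=
  Matrix.of fun p q => (if p.1 = q.1 then 1 else 0) * A (p.2.1, p.2.2) (q.2.1, q.2.2)

/-- (A₁₃)^{abc}_{def} = A^{ac}_{df} δ^b_e. -/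
def A13 {n : ℕ} (A : Mat2 n) : Mat3 n :=
  Matrix.of fun p q => A (p.1, p.2.2) (q.1, q.2.2) * (if p.2.1 = q.2.1 then 1 else 0)

/-- First partial transpose: (A^{t₁})^{ab}_{cd} = A^{cb}_{ad}. -/
def t1 {n : ℕ} (A : Mat2 n) : Mat2 n :=
  Matrix.of fun p q => A (q.1, p.2) (p.1, q.2)

/-- Second partial transpose: (A^{t₂})^{ab}_{cd} = A^{ad}_{cb}. -/
def t2 {n : ℕ} (A : Mat2 n) : Mat2 n :=
  Matrix.of fun p q => A (p.1, q.2) (q.1, p.2)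

/-- Second partial trace: Tr₂(A)^a_c = Σ_d A^{ad}_{cd}. -/
def Tr2 {n : ℕ} (A : Mat2 n) : Mat1 n :=
  Matrix.of fun a c => ∑ d, A (a, d) (c, d)

/-- The quantum Yang–Baxter equation R₁₂R₁₃R₂₃ = R₂₃R₁₃R₁₂. -/
def QYB {n : ℕ} (R : Mat2 n) : Prop :=
  A12 R * A13 R * A23 R = A23 R * A13 R * A12 R

/-- The braid equation S₁₂S₂₃S₁₂ = S₂₃S₁₂S₂₃. -/
def Braid {n : ℕ} (S : Mat2 n) : Prop :=
  A12 S * A23 S * A12 S = A23 S * A12 S * A23 S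

/-- R is biinvertible if both R and R^{t₂} are invertible. -/
def Biinv {n : ℕ} (R : Mat2 n) : Prop :=
  IsUnit R ∧ IsUnit (t2 R)

/-- R̃ = ((R^{t₂})⁻¹)^{t₂}. -/
noncomputable def Rtil {n : ℕ} (R : Mat2 n) : Mat2 n := t2 (t2 R)⁻¹

/-- U^i_j = Σ_a R̃^{ai}_{ja}. -/
noncomputable def Umat {n : ℕ} (R : Mat2 n) : Mat1 n :=
  Matrix.of fun i j => ∑ a, Rtil R (a, i) (j, a)

/-- V^i_j = Σ_a R̃^{ia}_{aj}. -/
noncomputable def Vmat {n : ℕ} (R : Mat2 n) : Mat1 n :=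
  Matrix.of fun i j => ∑ a, Rtil R (i, a) (a, j)

/-- Enhanced R-matrix in the sense of Definition 2 (Turaev, tangle category version). -/
def IsEnhanced2 {n : ℕ} (S : Mat2 n) (μ : Mat1 n) : Prop :=
  IsUnit S ∧ IsUnit μ ∧ Braid S ∧
  S * kron μ μ = kron μ μ * S ∧
  Tr2 (S * kron 1 μ) = 1 ∧ Tr2 (S⁻¹ * kron 1 μ) = 1 ∧
  t1 (Pmat n * S⁻¹) * kron 1 μ * t1 (S * Pmat n) * kron 1 μ⁻¹ = 1 ∧
  t1 (Pmat n * S) * kron 1 μ * t1 (S⁻¹ * Pmat n) * kron 1 μ⁻¹ = 1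

/-- Enhanced R-matrix in the sense of Definition 1 (Turaev, link invariant version). -/
def IsEnhanced1 {n : ℕ} (S : Mat2 n) (μ : Mat1 n) (α β : ℂ) : Prop :=
  IsUnit S ∧ α ≠ 0 ∧ β ≠ 0 ∧ Braid S ∧
  S * kron μ μ = kron μ μ * S ∧
  Tr2 (S * kron μ μ) = (α * β) • μ ∧
  Tr2 (S⁻¹ * kron μ μ) = (α⁻¹ * β) • μ

variable {n : ℕ}

lemma Pmat_mul_apply (A : Mat2 n) (p q) : (Pmat n * A) p q = A (p.2, p.1) q := by
  simp [Matrix.mul_apply, Pmat, Fintype.sum_prod_type, ite_and]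

lemma mul_Pmat_apply (A : Mat2 n) (p q) : (A * Pmat n) p q = A p (q.2, q.1) := by
  simp [Matrix.mul_apply, Pmat, Fintype.sum_prod_type, ite_and, eq_comm]

lemma Pmat_mul_Pmat : (Pmat n) * Pmat n = 1 := by
  ext p q
  rw [Pmat_mul_apply]
  simp [Pmat, Matrix.one_apply, Prod.ext_iff, and_comm]

lemma isUnit_Pmat : IsUnit (Pmat n) :=
  ⟨⟨Pmat n, Pmat n, Pmat_mul_Pmat, Pmat_mul_Pmat⟩, rfl⟩

lemma isUnit_third {A B C D : Mat2 n} (h : A * B * C * D = 1) : IsUnit C := by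
  have h1 : IsUnit (A * B * C * D) := h ▸ isUnit_one
  rw [Matrix.isUnit_iff_isUnit_det] at h1 ⊢
  simp only [Matrix.det_mul, IsUnit.mul_iff] at h1
  exact h1.1.2

lemma t2_conj (A : Mat2 n) : t2 A = Pmat n * t1 (Pmat n * A * Pmat n) * Pmat n := by
  ext p q
  rw [mul_Pmat_apply, Pmat_mul_apply]
  simp [t1, t2, Pmat_mul_apply, mul_Pmat_apply]

lemma t2_transpose (A : Mat2 n) : t2 A = (t1 A).transpose := rfl

lemma key_left (R : Mat2 n) (hU : IsUnit (t2 R)) (p q : Fin n × Fin n) :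
    (∑ r : Fin n × Fin n, R (p.1, r.2) (r.1, p.2) * Rtil R (r.1, q.2) (q.1, r.2))
      = if p = q then 1 else 0 := by
  have h : t2 R * t2 (Rtil R) = 1 := by
    have e : t2 (Rtil R) = (t2 R)⁻¹ := rfl
    rw [e]
    exact Matrix.mul_nonsing_inv _ ((Matrix.isUnit_iff_isUnit_det _).mp hU)
  have := congrFun (congrFun h p) q
  simpa [Matrix.mul_apply, t2, Matrix.one_apply] using this

lemma key_right (R : Mat2 n) (hU : IsUnit (t2 R)) (p q : Fin n × Fin n) :
    (∑ r : Fin n × Fin n, Rtil R (p.1, r.2) (r.1, p.2) * R (r.1, q.2) (q.1, r.2))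
      = if p = q then 1 else 0 := by
  have h : t2 (Rtil R) * t2 R = 1 := by
    have e : t2 (Rtil R) = (t2 R)⁻¹ := rfl
    rw [e]
    exact Matrix.nonsing_inv_mul _ ((Matrix.isUnit_iff_isUnit_det _).mp hU)
  have := congrFun (congrFun h p) q
  simpa [Matrix.mul_apply, t2, Matrix.one_apply] using this

lemma tr_entry1 {R : Mat2 n} {μ : Mat1 n} (h : Tr2 (Pmat n * R * kron 1 μ) = 1)
    (a c : Fin n) :
    (∑ p : Fin n × Fin n, R (p.1, a) (c, p.2) * μ p.2 p.1) = if a = c then 1 else 0 := by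
  have h1 := congrFun (congrFun h a) c
  have e1 : ∀ d : Fin n, (Pmat n * R * kron 1 μ) (a, d) (c, d)
      = ∑ f, R (d, a) (c, f) * μ f d := by
    intro d
    rw [mul_assoc, Pmat_mul_apply]
    simp [Matrix.mul_apply, kron, Matrix.one_apply, Fintype.sum_prod_type, ite_mul,
      mul_ite, Finset.sum_ite_eq, Finset.sum_ite_eq']
  rw [show (1 : Mat1 n) a c = if a = c then 1 else 0 from Matrix.one_apply] at h1
  rw [← h1]
  show _ = ∑ d, (Pmat n * R * kron 1 μ) (a, d) (c, d)
  simp only [e1, Fintype.sum_prod_type]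

lemma tr_entry2 {R : Mat2 n} {ν : Mat1 n} (h : Tr2 (R * Pmat n * kron 1 ν) = 1)
    (a c : Fin n) :
    (∑ p : Fin n × Fin n, R (a, p.1) (p.2, c) * ν p.2 p.1) = if a = c then 1 else 0 := by
  have h1 := congrFun (congrFun h a) c
  have e1 : ∀ d : Fin n, (R * Pmat n * kron 1 ν) (a, d) (c, d)
      = ∑ f, R (a, d) (f, c) * ν f d := by
    intro d
    rw [mul_assoc]
    simp [Matrix.mul_apply, Pmat, ite_and, kron, Matrix.one_apply, Fintype.sum_prod_type,
      ite_mul, mul_ite, Finset.sum_ite_eq, Finset.sum_ite_eq']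
  rw [show (1 : Mat1 n) a c = if a = c then 1 else 0 from Matrix.one_apply] at h1
  rw [← h1]
  show _ = ∑ d, (R * Pmat n * kron 1 ν) (a, d) (c, d)
  simp only [e1, Fintype.sum_prod_type]

lemma mu_eq_U (R : Mat2 n) (μ : Mat1 n) (hU : IsUnit (t2 R))
    (hTr : Tr2 (Pmat n * R * kron 1 μ) = 1) : μ = Umat R := by
  ext i j
  show μ i j = ∑ a, Rtil R (a, i) (j, a)
  have step1 : μ i j = ∑ p : Fin n × Fin n, (if p = (j, i) then (1:ℂ) else 0) * μ p.2 p.1 := by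
    simp
  rw [step1]
  calc ∑ p : Fin n × Fin n, (if p = (j,i) then (1:ℂ) else 0) * μ p.2 p.1
      = ∑ p : Fin n × Fin n,
          (∑ r : Fin n × Fin n, R (p.1, r.2) (r.1, p.2) * Rtil R (r.1, i) (j, r.2)) * μ p.2 p.1 := by
        refine Finset.sum_congr rfl fun p _ => ?_
        rw [key_left R hU p (j, i)]
    _ = ∑ r : Fin n × Fin n,
          (∑ p : Fin n × Fin n, R (p.1, r.2) (r.1, p.2) * μ p.2 p.1) * Rtil R (r.1, i) (j, r.2) := by
        simp only [Finset.sum_mul]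
        rw [Finset.sum_comm]
        exact Finset.sum_congr rfl fun r _ => Finset.sum_congr rfl fun p _ => by ring
    _ = ∑ r : Fin n × Fin n, (if r.2 = r.1 then (1:ℂ) else 0) * Rtil R (r.1, i) (j, r.2) := by
        refine Finset.sum_congr rfl fun r _ => ?_
        rw [tr_entry1 hTr r.2 r.1]
    _ = ∑ a, Rtil R (a, i) (j, a) := by
        rw [Fintype.sum_prod_type]
        simp

lemma nu_eq_V (R : Mat2 n) (ν : Mat1 n) (hU : IsUnit (t2 R))
    (hTr : Tr2 (R * Pmat n * kron 1 ν) = 1) : ν = Vmat R := by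
  ext i j
  show ν i j = ∑ a, Rtil R (i, a) (a, j)
  have step1 : ν i j = ∑ p : Fin n × Fin n, (if (i, j) = (p.2, p.1) then (1:ℂ) else 0) * ν p.2 p.1 := by
    simp [Prod.ext_iff, Fintype.sum_prod_type, ite_and, Finset.sum_ite_eq]
  rw [step1]
  calc ∑ p : Fin n × Fin n, (if (i, j) = (p.2, p.1) then (1:ℂ) else 0) * ν p.2 p.1
      = ∑ p : Fin n × Fin n,
          (∑ r : Fin n × Fin n, Rtil R (i, r.2) (r.1, j) * R (r.1, p.1) (p.2, r.2)) * ν p.2 p.1 := by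
        refine Finset.sum_congr rfl fun p _ => ?_
        rw [key_right R hU (i, j) (p.2, p.1)]
    _ = ∑ r : Fin n × Fin n,
          (∑ p : Fin n × Fin n, R (r.1, p.1) (p.2, r.2) * ν p.2 p.1) * Rtil R (i, r.2) (r.1, j) := by
        simp only [Finset.sum_mul]
        rw [Finset.sum_comm]
        exact Finset.sum_congr rfl fun r _ => Finset.sum_congr rfl fun p _ => by ring
    _ = ∑ r : Fin n × Fin n, (if r.1 = r.2 then (1:ℂ) else 0) * Rtil R (i, r.2) (r.1, j) := by
        refine Finset.sum_congr rfl fun r _ => ?_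
        rw [tr_entry2 hTr r.1 r.2]
    _ = ∑ a, Rtil R (i, a) (a, j) := by
        rw [Fintype.sum_prod_type]
        simp

lemma case1 (R : Mat2 n) (hR : IsUnit R) (μ : Mat1 n)
    (h : IsEnhanced2 (Pmat n * R) μ) : Biinv R ∧ μ = Umat R := by
  obtain ⟨hS, hμ, _, _, h5, _, h7, _⟩ := h
  have hRinv : R * R⁻¹ = 1 :=
    Matrix.mul_nonsing_inv _ ((Matrix.isUnit_iff_isUnit_det _).mp hR)
  have hSinv : (Pmat n * R)⁻¹ = R⁻¹ * Pmat n := by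
    apply Matrix.inv_eq_right_inv
    rw [mul_assoc, ← mul_assoc R R⁻¹ (Pmat n), hRinv, one_mul, Pmat_mul_Pmat]
  rw [hSinv] at h7
  have hu3 : IsUnit (t1 (Pmat n * R * Pmat n)) := isUnit_third h7
  have hT2 : IsUnit (t2 R) := by
    rw [t2_conj R]
    exact (isUnit_Pmat.mul hu3).mul isUnit_Pmat
  exact ⟨⟨hR, hT2⟩, mu_eq_U R μ hT2 h5⟩

lemma case2 (R : Mat2 n) (hR : IsUnit R) (ν : Mat1 n)
    (h : IsEnhanced2 (R * Pmat n) ν) : Biinv R ∧ ν = Vmat R := by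
  obtain ⟨hS, hν, _, _, h5, _, h7, _⟩ := h
  have hRinv : R * R⁻¹ = 1 :=
    Matrix.mul_nonsing_inv _ ((Matrix.isUnit_iff_isUnit_det _).mp hR)
  have hSinv : (R * Pmat n)⁻¹ = Pmat n * R⁻¹ := by
    apply Matrix.inv_eq_right_inv
    rw [mul_assoc, ← mul_assoc (Pmat n) (Pmat n) R⁻¹, Pmat_mul_Pmat, one_mul, hRinv]
  rw [hSinv, mul_assoc R (Pmat n) (Pmat n), Pmat_mul_Pmat, mul_one] at h7
  have hu3 : IsUnit (t1 R) := isUnit_third h7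
  have hT2 : IsUnit (t2 R) := by
    rw [t2_transpose, Matrix.isUnit_iff_isUnit_det, Matrix.det_transpose,
      ← Matrix.isUnit_iff_isUnit_det]
    exact hu3
  exact ⟨⟨hR, hT2⟩, nu_eq_V R ν hT2 h5⟩

theorem enhancement_unique (n : ℕ) (hn : 1 ≤ n) (R : Mat2 n)
    (hR : IsUnit R) :
    (∀ μ : Mat1 n, IsEnhanced2 (Pmat n * R) μ → Biinv R ∧ μ = Umat R) ∧
    (∀ ν : Mat1 n, IsEnhanced2 (R * Pmat n) ν → Biinv R ∧ ν = Vmat R) ∧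
    (∀ μ μ' : Mat1 n, IsEnhanced2 (Pmat n * R) μ → IsEnhanced2 (Pmat n * R) μ' → μ = μ') ∧
    (∀ ν ν' : Mat1 n, IsEnhanced2 (R * Pmat n) ν → IsEnhanced2 (R * Pmat n) ν' → ν = ν') := by
  refine ⟨fun μ h => case1 R hR μ h, fun ν h => case2 R hR ν h, ?_, ?_⟩
  · intro μ μ' h h'
    rw [(case1 R hR μ h).2, (case1 R hR μ' h').2]
  · intro ν ν' h h'
    rw [(case2 R hR ν h).2, (case2 R hR ν' h').2]

end

end Enhance
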